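/- Let x ∈ Incomp_n(δ, ρ) be an incompressible unit vector, let m ≤ min{d, ⌊ρ²δn/2⌋}, and let J be a uniformly random m-element subset of {1,…,n}. Define the event E(x) = { P_J x / ‖P_J x‖_2 ∈ S^J and ρ√m/√(2n) ≤ ‖P_J x‖_2 ≤ √m/√(δn) }, where S^J is the set of unit vectors supported on J with all coordinates of absolute value between K_1/√m and K_2/√m, K_1 = ρ√(δ/2), K_2 = K_1^{-1}. Then P_J(E(x)) ≥ (c₂δ)^m for a constant c₂ > 0 depending only on ρ. -/

import Mathlib

open MeasureTheory ProbabilityTheory Real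
open scoped ENNReal Classical

noncomputable section

/-- `EucSp n` is Euclidean space `ℝ^n`. -/
abbrev EucSp (n : ℕ) := EuclideanSpace ℝ (Fin n)

/-- Matrix-vector multiplication as a map between Euclidean spaces. -/
def mulVecE {N n : ℕ} (A : Matrix (Fin N) (Fin n) ℝ) (x : EucSp n) : EucSp N := WithLp.toLp 2 (A.mulVec x)

/-- Operator norm (`ℓ² → ℓ²`) of a rectangular matrix. -/
def opNormM {N n : ℕ} (A : Matrix (Fin N) (Fin n) ℝ) : ℝ :=
  ⨆ x : Metric.sphere (0 : EucSp n) 1, ‖mulVecE A x‖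

/-- The set of `δn`-sparse vectors in `ℝ^n`. -/
def sparseVecs (n : ℕ) (δ : ℝ) : Set (EucSp n) :=
  {y | (Nat.card {i : Fin n // y i ≠ 0} : ℝ) ≤ δ * n}

/-- Compressible unit vectors: within distance `ρ` of the `δn`-sparse vectors. -/
def compVecs (n : ℕ) (δ ρ : ℝ) : Set (EucSp n) :=
  {x | ‖x‖ = 1 ∧ Metric.infDist x (sparseVecs n δ) ≤ ρ}

/-- Incompressible unit vectors. -/
def incompVecs (n : ℕ) (δ ρ : ℝ) : Set (EucSp n) :=
  {x | ‖x‖ = 1 ∧ ρ < Metric.infDist x (sparseVecs n δ)}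

/-- The set `S^J` of totally spread unit vectors supported on `J`, with parameters
`K₁ = ρ√(δ/2)` and `K₂ = K₁⁻¹`. -/
def spreadVecs (n : ℕ) (J : Finset (Fin n)) (m : ℕ) (δ ρ : ℝ) : Set (EucSp n) :=
  {y | ‖y‖ = 1 ∧ (∀ k, k ∉ J → y k = 0) ∧
    ∀ k ∈ J, ρ * Real.sqrt (δ / 2) / Real.sqrt m ≤ |y k| ∧
      |y k| ≤ (ρ * Real.sqrt (δ / 2))⁻¹ / Real.sqrt m}

/-!
Let `σ` be the set of coordinates `k` with `ρ/√(2n) ≤ |x k| ≤ 1/√(δn)`. Fewer than `δn`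
coordinates exceed `1/√(δn)`, so zeroing them gives a sparse vector, and incompressibility forces
the remaining coordinates to carry mass `> ρ²`; those below `ρ/√(2n)` carry at most `ρ²/2`, hence
`|σ| > ρ²δn/2 ≥ m`. Every `m`-subset `J ⊆ σ` lies in the event: `‖P_J x‖` is squeezed between
`√m ρ/√(2n)` and `√m/√(δn)`, and the two coordinate bounds have ratio `ρ√(δ/2)`. Finally
`C(|σ|, m) ≥ (|σ|/m)^m ≥ (|σ|/(3n))^m C(n, m)`, using `m! ≥ (m/3)^m`, which gives `c₂ = ρ²/6`.
-/

open Finset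
open scoped Nat

theorem pow_le_three_pow_mul_factorial (m : ℕ) : (m : ℝ) ^ m ≤ 3 ^ m * m ! := by
  have hexp : (m : ℝ) ^ m / m ! ≤ 3 ^ m :=
    calc (m : ℝ) ^ m / m ! ≤ exp m := pow_div_factorial_le_exp _ (Nat.cast_nonneg m) m
      _ = exp 1 ^ m := by rw [← exp_nat_mul, mul_one]
      _ ≤ 3 ^ m := by gcongr; exact exp_one_lt_three.le
  rwa [div_le_iff₀ (by positivity)] at hexp

theorem div_pow_mul_factorial_le_descFactorial {s m : ℕ} (hms : m ≤ s) :
    ((s : ℝ) / m) ^ m * m ! ≤ s.descFactorial m := by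
  have hcast (b : ℕ) (hb : m ≤ b) : (b.descFactorial m : ℝ) = ∏ i ∈ range m, ((b : ℝ) - i) := by
    rw [Nat.descFactorial_eq_prod_range, Nat.cast_prod]
    exact prod_congr rfl fun i hi => Nat.cast_sub ((mem_range.mp hi).le.trans hb)
  rw [← Nat.descFactorial_self, hcast s hms, hcast m le_rfl, ← card_range m, ← prod_const,
    card_range, ← prod_mul_distrib]
  refine prod_le_prod (fun i hi => ?_) fun i hi => ?_
  · have : (i : ℝ) < m := by exact_mod_cast mem_range.mp hi
    exact mul_nonneg (by positivity) (by linarith)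
  · have hi' : (i : ℝ) < m := by exact_mod_cast mem_range.mp hi
    have hmsR : (m : ℝ) ≤ s := by exact_mod_cast hms
    rw [div_mul_eq_mul_div, div_le_iff₀ (by linarith [Nat.cast_nonneg (α := ℝ) i])]
    nlinarith [Nat.cast_nonneg (α := ℝ) i]

theorem div_pow_le_choose {s m : ℕ} (hms : m ≤ s) : ((s : ℝ) / m) ^ m ≤ s.choose m := by
  rw [← mul_le_mul_iff_left₀ (by positivity : (0 : ℝ) < m !)]
  calc ((s : ℝ) / m) ^ m * m ! ≤ s.descFactorial m := div_pow_mul_factorial_le_descFactorial hms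
    _ = s.choose m * m ! := by rw [Nat.descFactorial_eq_factorial_mul_choose]; push_cast; ring

theorem choose_mul_div_pow_le_choose (n : ℕ) {s m : ℕ} (hms : m ≤ s) :
    (n.choose m : ℝ) * (s / (3 * n)) ^ m ≤ s.choose m := by
  have hscale : (n : ℝ) * (s / (3 * n)) ≤ s / 3 := by
    rcases n.eq_zero_or_pos with rfl | hn
    · simp; positivity
    · field_simp; rfl
  have hstirling : (s / 3 : ℝ) ^ m ≤ (s / m) ^ m * m ! := by
    rcases m.eq_zero_or_pos with rfl | hm
    · simp
    calc (s / 3 : ℝ) ^ m = (s / m) ^ m * (m ^ m / 3 ^ m) := by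
          rw [div_pow, div_pow]; field_simp
      _ ≤ (s / m) ^ m * m ! := by
          gcongr
          rw [div_le_iff₀ (by positivity), mul_comm]
          exact pow_le_three_pow_mul_factorial m
  calc (n.choose m : ℝ) * (s / (3 * n)) ^ m
      ≤ (n : ℝ) ^ m / m ! * (s / (3 * n)) ^ m := by gcongr; exact Nat.choose_le_pow_div m n
    _ = (n * (s / (3 * n))) ^ m / m ! := by rw [mul_pow]; ring
    _ ≤ (s / 3 : ℝ) ^ m / m ! := by gcongr
    _ ≤ ((s : ℝ) / m) ^ m := by rwa [div_le_iff₀ (by positivity)]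
    _ ≤ s.choose m := div_pow_le_choose hms

section SumSq

variable {ι : Type*}

theorem card_mul_sq_le_sum_sq {f : ι → ℝ} {s : Finset ι} {lo : ℝ} (hlo : 0 ≤ lo)
    (h : ∀ k ∈ s, lo ≤ |f k|) : #s * lo ^ 2 ≤ ∑ k ∈ s, f k ^ 2 := by
  rw [← nsmul_eq_mul, ← sum_const]
  exact sum_le_sum fun k hk => by simpa only [sq_abs] using pow_le_pow_left₀ hlo (h k hk) 2

theorem sum_sq_le_card_mul_sq {f : ι → ℝ} {s : Finset ι} {hi : ℝ}
    (h : ∀ k ∈ s, |f k| ≤ hi) : ∑ k ∈ s, f k ^ 2 ≤ #s * hi ^ 2 := by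
  rw [← nsmul_eq_mul, ← sum_const]
  exact sum_le_sum fun k hk => by simpa only [sq_abs] using pow_le_pow_left₀ (abs_nonneg _) (h k hk) 2

theorem sqrt_card_mul_le_sqrt_sum_sq {f : ι → ℝ} {s : Finset ι} {lo : ℝ} (hlo : 0 ≤ lo)
    (h : ∀ k ∈ s, lo ≤ |f k|) : √(#s : ℝ) * lo ≤ √(∑ k ∈ s, f k ^ 2) := by
  refine Real.le_sqrt_of_sq_le ?_
  rw [mul_pow, Real.sq_sqrt (Nat.cast_nonneg _)]
  exact card_mul_sq_le_sum_sq hlo h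

theorem sqrt_sum_sq_le_sqrt_card_mul {f : ι → ℝ} {s : Finset ι} {hi : ℝ} (hhi : 0 ≤ hi)
    (h : ∀ k ∈ s, |f k| ≤ hi) : √(∑ k ∈ s, f k ^ 2) ≤ √(#s : ℝ) * hi := by
  rw [Real.sqrt_le_iff, mul_pow, Real.sq_sqrt (Nat.cast_nonneg _)]
  exact ⟨by positivity, sum_sq_le_card_mul_sq h⟩

def spreadPart [Fintype ι] (f : ι → ℝ) (lo hi : ℝ) : Finset ι :=
  univ.filter fun k => lo ≤ |f k| ∧ |f k| ≤ hi

theorem sum_sq_filter_abs_le_le_spreadPart [Fintype ι] (f : ι → ℝ) (lo hi : ℝ) :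
    ∑ k ∈ univ.filter (fun k => |f k| ≤ hi), f k ^ 2 ≤
      #(spreadPart f lo hi) * hi ^ 2 + Fintype.card ι * lo ^ 2 := by
  rw [← sum_filter_add_sum_filter_not _ fun k => lo ≤ |f k|]
  have hspread : (univ.filter fun k => |f k| ≤ hi).filter (fun k => lo ≤ |f k|) =
      spreadPart f lo hi := by
    ext k; simp [spreadPart, and_comm]
  gcongr
  · rw [hspread]
    exact sum_sq_le_card_mul_sq fun k hk => (mem_filter.mp hk).2.2
  · calc _ ≤ (#((univ.filter fun k => |f k| ≤ hi).filter fun k => ¬lo ≤ |f k|) : ℝ) * lo ^ 2 :=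
          sum_sq_le_card_mul_sq fun k hk => (not_le.mp (mem_filter.mp hk).2).le
      _ ≤ Fintype.card ι * lo ^ 2 := by gcongr; exact card_le_univ _

end SumSq

theorem dist_sq_toLp_ite {ι : Type*} [Fintype ι] (x : EuclideanSpace ℝ ι) (p : ι → Prop)
    [DecidablePred p] :
    dist x (WithLp.toLp 2 fun k => if p k then x k else 0) ^ 2 =
      ∑ k ∈ univ.filter (fun k => ¬p k), x k ^ 2 := by
  rw [EuclideanSpace.dist_sq_eq, sum_filter]
  refine sum_congr rfl fun k _ => ?_
  by_cases hk : p k <;> simp [hk, sq_abs]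

theorem mem_sparseVecs_of_support_subset {n : ℕ} {δ : ℝ} {y : EucSp n} {A : Finset (Fin n)}
    (hA : (#A : ℝ) ≤ δ * n) (hy : ∀ k ∉ A, y k = 0) : y ∈ sparseVecs n δ := by
  refine le_trans ?_ hA
  rw [Nat.card_eq_fintype_card, Fintype.card_subtype]
  exact_mod_cast card_le_card fun k hk => by
    by_contra hkA
    simp [hy k hkA] at hk

theorem sum_sq_eq_one_of_norm_eq_one {n : ℕ} {x : EucSp n} (hx : ‖x‖ = 1) :
    ∑ k, x k ^ 2 = 1 := by
  rw [← EuclideanSpace.real_norm_sq_eq, hx, one_pow]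

theorem pos_of_norm_eq_one {n : ℕ} {x : EucSp n} (hx : ‖x‖ = 1) : 0 < n := by
  rcases n.eq_zero_or_pos with rfl | hn
  · simpa using sum_sq_eq_one_of_norm_eq_one hx
  · exact hn

theorem card_spreadPart_gt_of_mem_incompVecs {n : ℕ} {δ ρ : ℝ} {x : EucSp n} (hρ : 0 ≤ ρ)
    (hδ : 0 < δ) (hx : x ∈ incompVecs n δ ρ) :
    ρ ^ 2 * δ * n / 2 < #(spreadPart x (ρ / √(2 * (n : ℝ))) (1 / √(δ * n))) := by
  obtain ⟨hnorm, hdist⟩ := hx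
  have hsum := sum_sq_eq_one_of_norm_eq_one hnorm
  have hn : (0 : ℝ) < n := by exact_mod_cast pos_of_norm_eq_one hnorm
  set τ := 1 / √(δ * n)
  have hτ : τ ^ 2 = 1 / (δ * n) := by rw [div_pow, Real.sq_sqrt (by positivity), one_pow]
  set A := univ.filter fun k => τ < |x k|
  have hA : (#A : ℝ) ≤ δ * n := by
    have hmarkov : (#A : ℝ) * τ ^ 2 ≤ 1 :=
      calc (#A : ℝ) * τ ^ 2 ≤ ∑ k ∈ A, x k ^ 2 :=
            card_mul_sq_le_sum_sq (by positivity) fun k hk => (mem_filter.mp hk).2.le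
        _ ≤ ∑ k, x k ^ 2 := sum_le_sum_of_subset_of_nonneg (subset_univ _) fun _ _ _ => sq_nonneg _
        _ = 1 := hsum
    rwa [hτ, mul_one_div, div_le_one (by positivity)] at hmarkov
  -- `x` restricted to its large coordinates is sparse, so the small coordinates carry mass `> ρ²`.
  have hsmall : ρ ^ 2 < ∑ k ∈ univ.filter (fun k => |x k| ≤ τ), x k ^ 2 := by
    have hsparse : (WithLp.toLp 2 fun k => if τ < |x k| then x k else 0 : EucSp n) ∈
        sparseVecs n δ :=
      mem_sparseVecs_of_support_subset hA fun k hk => by simp_all [A]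
    have := dist_sq_toLp_ite x fun k => τ < |x k|
    simp only [not_lt] at this
    rw [← this]
    gcongr
    exact hdist.trans_le (Metric.infDist_le_dist_of_mem hsparse)
  have hlarge : ρ ^ 2 / 2 < #(spreadPart x (ρ / √(2 * (n : ℝ))) τ) / (δ * n) := by
    have hsplit := sum_sq_filter_abs_le_le_spreadPart (⇑x) (ρ / √(2 * (n : ℝ))) τ
    rw [Fintype.card_fin, hτ, div_pow, Real.sq_sqrt (by positivity), mul_one_div] at hsplit
    have hhalf : (n : ℝ) * (ρ ^ 2 / (2 * n)) = ρ ^ 2 / 2 := by field_simp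
    linarith
  rw [lt_div_iff₀ (by positivity)] at hlarge
  linarith

theorem normalize_mem_spreadVecs {n m : ℕ} {δ ρ lo hi : ℝ} {x : EucSp n} {J : Finset (Fin n)}
    (hJ : #J = m) (hm : 0 < m) (hlo : 0 < lo) (hK : ρ * √(δ / 2) = lo / hi)
    (hx : ∀ j ∈ J, lo ≤ |x j| ∧ |x j| ≤ hi) :
    WithLp.toLp 2 (fun i => if i ∈ J then x i / √(∑ j ∈ J, x j ^ 2) else 0) ∈
      spreadVecs n J m δ ρ := by
  set t := √(∑ j ∈ J, x j ^ 2)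
  obtain ⟨j₀, hj₀⟩ := card_pos.mp (hJ ▸ hm)
  have hhi : 0 < hi := hlo.trans_le ((hx j₀ hj₀).1.trans (hx j₀ hj₀).2)
  have hsqrtm : 0 < √(m : ℝ) := Real.sqrt_pos.mpr (by exact_mod_cast hm)
  have hlow : √(m : ℝ) * lo ≤ t := hJ ▸ sqrt_card_mul_le_sqrt_sum_sq hlo.le fun j hj => (hx j hj).1
  have hhigh : t ≤ √(m : ℝ) * hi := hJ ▸ sqrt_sum_sq_le_sqrt_card_mul hhi.le fun j hj => (hx j hj).2
  have ht : 0 < t := lt_of_lt_of_le (by positivity) hlow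
  refine ⟨?_, fun k hk => by simp [hk], fun k hk => ?_⟩
  · rw [← pow_eq_one_iff_of_nonneg (norm_nonneg _) two_ne_zero, EuclideanSpace.real_norm_sq_eq]
    simp only [apply_ite (· ^ 2), div_pow, ne_eq, OfNat.ofNat_ne_zero,
      not_false_eq_true, zero_pow, sum_ite_mem, univ_inter, ← sum_div]
    rw [Real.sq_sqrt (sum_nonneg fun _ _ => sq_nonneg _), div_self (Real.sqrt_pos.mp ht).ne']
  · simp only [hk, if_true, abs_div, abs_of_pos ht, hK]
    constructor
    · calc lo / hi / √(m : ℝ) = lo / (√(m : ℝ) * hi) := by rw [div_div, mul_comm]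
        _ ≤ lo / t := by gcongr
        _ ≤ |x k| / t := by gcongr; exact (hx k hk).1
    · calc |x k| / t ≤ hi / t := by gcongr; exact (hx k hk).2
        _ ≤ hi / (√(m : ℝ) * lo) := by gcongr
        _ = (lo / hi)⁻¹ / √(m : ℝ) := by rw [inv_div, div_div, mul_comm]

/-- The event `E(x)` for the subset `J`. -/
def spreadEvent {n : ℕ} (x : EucSp n) (J : Finset (Fin n)) (m : ℕ) (δ ρ : ℝ) : Prop :=
  WithLp.toLp 2 (fun i => if i ∈ J then x i / Real.sqrt (∑ j ∈ J, (x j) ^ 2) else 0) ∈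
      spreadVecs n J m δ ρ ∧
    ρ * Real.sqrt m / Real.sqrt (2 * n) ≤ Real.sqrt (∑ j ∈ J, (x j) ^ 2) ∧
    Real.sqrt (∑ j ∈ J, (x j) ^ 2) ≤ Real.sqrt m / Real.sqrt (δ * n)

theorem spreadEvent_of_subset_spreadPart {n m : ℕ} {δ ρ : ℝ} {x : EucSp n} {J : Finset (Fin n)}
    (hρ : 0 < ρ) (hδ : 0 < δ) (hn : 0 < n) (hm : 0 < m)
    (hJ : J ⊆ spreadPart x (ρ / √(2 * (n : ℝ))) (1 / √(δ * n))) (hJm : #J = m) :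
    spreadEvent x J m δ ρ := by
  have hnR : (0 : ℝ) < n := by exact_mod_cast hn
  have hx : ∀ j ∈ J, ρ / √(2 * (n : ℝ)) ≤ |x j| ∧ |x j| ≤ 1 / √(δ * n) := fun j hj =>
    (mem_filter.mp (hJ hj)).2
  have hK : ρ * √(δ / 2) = ρ / √(2 * (n : ℝ)) / (1 / √(δ * n)) := by
    rw [show δ / 2 = (δ * n) / (2 * n) by field_simp, Real.sqrt_div' _ (by positivity)]
    field_simp
  refine ⟨normalize_mem_spreadVecs hJm hm (by positivity) hK hx, ?_, ?_⟩
  · calc ρ * √(m : ℝ) / √(2 * (n : ℝ)) = √(m : ℝ) * (ρ / √(2 * (n : ℝ))) := by ring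
      _ ≤ _ := hJm ▸ sqrt_card_mul_le_sqrt_sum_sq (by positivity) fun j hj => (hx j hj).1
  · calc _ ≤ √(m : ℝ) * (1 / √(δ * n)) :=
          hJm ▸ sqrt_sum_sq_le_sqrt_card_mul (by positivity) fun j hj => (hx j hj).2
      _ = √(m : ℝ) / √(δ * n) := by ring

/-- For an incompressible `x`, a uniformly random `m`-element subset `J` satisfies, with
probability at least `(c₂δ)^m`, that `P_J x / ‖P_J x‖₂ ∈ S^J` and
`ρ√m/√(2n) ≤ ‖P_J x‖₂ ≤ √m/√(δn)`.  (The probability is expressed by counting subsets.) -/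
theorem stmt8 (ρ : ℝ) (hρ : ρ ∈ Set.Ioc (0:ℝ) 1) :
    ∃ c₂ : ℝ, 0 < c₂ ∧
      ∀ (n d m : ℕ) (δ : ℝ), δ ∈ Set.Ioc (0:ℝ) 1 → 1 ≤ d → 1 ≤ m →
        (m : ℝ) ≤ min (d : ℝ) (ρ ^ 2 * δ * n / 2) →
        ∀ x ∈ incompVecs n δ ρ,
          (c₂ * δ) ^ m * (n.choose m : ℝ) ≤
            (((Finset.univ : Finset (Fin n)).powersetCard m).filter
              (fun J : Finset (Fin n) =>
                WithLp.toLp 2 (fun i => if i ∈ J then x i / Real.sqrt (∑ j ∈ J, (x j) ^ 2) else 0) ∈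
                  spreadVecs n J m δ ρ ∧
                ρ * Real.sqrt m / Real.sqrt (2 * n) ≤ Real.sqrt (∑ j ∈ J, (x j) ^ 2) ∧
                Real.sqrt (∑ j ∈ J, (x j) ^ 2) ≤ Real.sqrt m / Real.sqrt (δ * n))).card := by
  refine ⟨ρ ^ 2 / 6, by positivity [hρ.1], fun n d m δ hδ _ hm hmn x hx => ?_⟩
  have hn : 0 < n := pos_of_norm_eq_one hx.1
  set σ := spreadPart x (ρ / √(2 * (n : ℝ))) (1 / √(δ * n))
  have hσ := card_spreadPart_gt_of_mem_incompVecs hρ.1.le hδ.1 hx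
  have hmσ : m ≤ #σ := Nat.cast_le.mp ((hmn.trans (min_le_right _ _)).trans hσ.le)
  have hratio : ρ ^ 2 / 6 * δ ≤ #σ / (3 * n) := by
    rw [le_div_iff₀ (by positivity)]
    linarith
  calc (ρ ^ 2 / 6 * δ) ^ m * (n.choose m : ℝ) = n.choose m * (ρ ^ 2 / 6 * δ) ^ m := mul_comm _ _
    _ ≤ n.choose m * (#σ / (3 * n)) ^ m := by gcongr; positivity [hρ.1, hδ.1]
    _ ≤ (#σ).choose m := choose_mul_div_pow_le_choose n hmσ
    _ = #(σ.powersetCard m) := by rw [card_powersetCard]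
    _ ≤ _ := by
      gcongr
      intro J hJ
      obtain ⟨hJσ, hJm⟩ := mem_powersetCard.mp hJ
      exact mem_filter.mpr ⟨mem_powersetCard.mpr ⟨subset_univ J, hJm⟩,
        spreadEvent_of_subset_spreadPart hρ.1 hδ.1 hn hm hJσ hJm⟩
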